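/- Let S be a countable ℵ₀-categorical semigroup and let {(A_i, X_i) : i ∈ I} be a system of t-pivoted pairwise relatively characteristic subsets of S. Then the set of cardinalities {|A_i| : i ∈ I} is finite. If, moreover, each A_i is a subsemigroup of S, then {A_i : i ∈ I} contains only finitely many semigroups up to isomorphism, and each A_i is an ℵ₀-categorical semigroup. -/

import Mathlib

/-- Two `n`-tuples of a semigroup are automorphically equivalent if some semigroup
automorphism maps one to the other componentwise. -/
def AutRel (S : Type*) [Semigroup S] {n : ℕ} (a b : Fin n → S) : Prop :=
  ∃ φ : S ≃* S, ∀ k, φ (a k) = b k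

/-- A semigroup is ℵ₀-categorical if, for every `n ≥ 1`, the action of its automorphism
group on `n`-tuples has only finitely many orbits. -/
def Aleph0Categorical (S : Type*) [Semigroup S] : Prop :=
  ∀ n : ℕ, 1 ≤ n → ∃ t : Set (Fin n → S), t.Finite ∧
    ∀ a : Fin n → S, ∃ b ∈ t, AutRel S b a

/-- `{(A i, X i) : i ∈ I}` is a system of `t`-pivoted pairwise relatively characteristic
subsets of `S`: whenever an automorphism maps the pivot `X i` componentwise to `X j`,
its restriction to `A i` is a bijection onto `A j`. -/
def IsPRCSystem (S : Type*) [Semigroup S] {I : Type*} {t : ℕ}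
    (A : I → Set S) (X : I → Fin t → S) : Prop :=
  ∀ (φ : S ≃* S) (i j : I), (∀ k, φ (X i k) = X j k) → Set.BijOn φ (A i) (A j)

/-! Automorphisms that map one pivot to another restrict to bijections between the
corresponding sets, so everything is governed by the orbits of pivots, of which there are
finitely many. For the ℵ₀-categoricity of `A i`, an `n`-tuple `a` of `A i` is recorded by the
`(t + n)`-tuple `X i ++ a`: an automorphism of `S` matching two such tuples fixes `X i`, hence
restricts to an automorphism of `A i` matching the two `n`-tuples. -/

theorem exists_finite_index_reps {α I : Type*} (R : α → α → Prop) {T : Set α} (hT : T.Finite)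
    (hR : ∀ a, ∃ b ∈ T, R b a) (f : I → α) :
    ∃ F : Set I, F.Finite ∧ ∀ i, ∃ j ∈ F, ∃ b, R b (f j) ∧ R b (f i) := by
  let T' := {b | b ∈ T ∧ ∃ j, R b (f j)}
  have : Finite T' := (hT.subset fun _ hb => hb.1).to_subtype
  choose g hg using fun b : T' => b.2.2
  refine ⟨Set.range g, Set.finite_range g, fun i => ?_⟩
  obtain ⟨b, hbT, hb⟩ := hR (f i)
  exact ⟨g ⟨b, hbT, i, hb⟩, Set.mem_range_self _, b, hg ⟨b, hbT, i, hb⟩, hb⟩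

namespace AutRel

variable {S : Type*} [Semigroup S] {n : ℕ}

theorem symm {a b : Fin n → S} (h : AutRel S a b) : AutRel S b a := by
  obtain ⟨φ, hφ⟩ := h
  exact ⟨φ.symm, fun k => by rw [← hφ k, MulEquiv.symm_apply_apply]⟩

theorem trans {a b c : Fin n → S} (hab : AutRel S a b) (hbc : AutRel S b c) : AutRel S a c := by
  obtain ⟨φ, hφ⟩ := hab
  obtain ⟨ψ, hψ⟩ := hbc
  exact ⟨φ.trans ψ, fun k => by rw [MulEquiv.trans_apply, hφ k, hψ k]⟩

theorem exists_of_append {m : ℕ} {x y : Fin m → S} {a b : Fin n → S}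
    (h : AutRel S (Fin.append x a) (Fin.append y b)) :
    ∃ φ : S ≃* S, (∀ k, φ (x k) = y k) ∧ ∀ k, φ (a k) = b k := by
  obtain ⟨φ, hφ⟩ := h
  refine ⟨φ, fun k => ?_, fun k => ?_⟩
  · simpa only [Fin.append_left] using hφ (Fin.castAdd n k)
  · simpa only [Fin.append_right] using hφ (Fin.natAdd m k)

end AutRel

namespace Aleph0Categorical

variable {S : Type*} [Semigroup S]

theorem exists_finite_reps (hcat : Aleph0Categorical S) (m : ℕ) :
    ∃ T : Set (Fin m → S), T.Finite ∧ ∀ a : Fin m → S, ∃ b ∈ T, AutRel S b a := by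
  rcases Nat.eq_zero_or_pos m with rfl | hm
  · exact ⟨Set.univ, Set.finite_univ, fun a => ⟨a, trivial, MulEquiv.refl S, fun _ => rfl⟩⟩
  · exact hcat m hm

theorem exists_finite_autRel_reps (hcat : Aleph0Categorical S) {I : Type*} {m : ℕ}
    (f : I → Fin m → S) : ∃ F : Set I, F.Finite ∧ ∀ i, ∃ j ∈ F, AutRel S (f j) (f i) := by
  obtain ⟨T, hT, hTrep⟩ := hcat.exists_finite_reps m
  obtain ⟨F, hF, hFrep⟩ := exists_finite_index_reps (AutRel S) hT hTrep f
  refine ⟨F, hF, fun i => ?_⟩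
  obtain ⟨j, hjF, b, hbj, hbi⟩ := hFrep i
  exact ⟨j, hjF, hbj.symm.trans hbi⟩

end Aleph0Categorical

noncomputable def Set.BijOn.subsemigroupMulEquiv {F M N : Type*} [Mul M] [Mul N] [FunLike F M N]
    [MulHomClass F M N] {φ : F} {B : Subsemigroup M} {C : Subsemigroup N}
    (h : Set.BijOn φ B C) : B ≃* C :=
  { h.equiv φ with map_mul' := fun x y => Subtype.ext (map_mul φ (x : M) y) }

theorem Aleph0Categorical.subsemigroup_of_forall_bijOn {S : Type*} [Semigroup S]
    (hcat : Aleph0Categorical S) {t : ℕ} (x : Fin t → S) (B : Subsemigroup S)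
    (hB : ∀ φ : S ≃* S, (∀ k, φ (x k) = x k) → Set.BijOn φ B B) :
    Aleph0Categorical B := by
  intro n _
  obtain ⟨D, hD, hDrep⟩ :=
    hcat.exists_finite_autRel_reps fun a : Fin n → B => Fin.append x fun k => (a k : S)
  refine ⟨D, hD, fun a => ?_⟩
  obtain ⟨b, hbD, hba⟩ := hDrep a
  obtain ⟨φ, hφx, hφb⟩ := hba.exists_of_append
  exact ⟨b, hbD, (hB φ hφx).subsemigroupMulEquiv, fun k => Subtype.ext (hφb k)⟩

theorem aleph0Categorical_prc_system (S : Type*) [Semigroup S]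
    (hcat : Aleph0Categorical S) {I : Type*} {t : ℕ}
    (A : I → Set S) (X : I → Fin t → S) (hprc : IsPRCSystem S A X) :
    (Set.range fun i => Cardinal.mk (A i)).Finite ∧
    ∀ B : I → Subsemigroup S, (∀ i, (B i : Set S) = A i) →
      (∃ F : Set I, F.Finite ∧ ∀ i : I, ∃ j ∈ F, Nonempty ((B i) ≃* (B j))) ∧
      ∀ i : I, Aleph0Categorical (B i) := by
  obtain ⟨F, hF, hFrep⟩ := hcat.exists_finite_autRel_reps X
  refine ⟨(hF.image fun j => Cardinal.mk (A j)).subset ?_, fun B hB => ⟨⟨F, hF, fun i => ?_⟩,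
    fun i => hcat.subsemigroup_of_forall_bijOn (X i) (B i) fun φ hφ => ?_⟩⟩
  · rintro _ ⟨i, rfl⟩
    obtain ⟨j, hjF, φ, hφ⟩ := hFrep i
    exact ⟨j, hjF, Cardinal.mk_congr ((hprc φ j i hφ).equiv φ)⟩
  · obtain ⟨j, hjF, φ, hφ⟩ := hFrep i
    have hbij : Set.BijOn φ (B j) (B i) := by rw [hB i, hB j]; exact hprc φ j i hφ
    exact ⟨j, hjF, ⟨hbij.subsemigroupMulEquiv.symm⟩⟩
  · rw [hB i]
    exact hprc φ i i hφ
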